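/- arXiv:2111.04147 — 10 statements merged into one kernel-verified Lean document; each statement's English description precedes it below -/
import Mathlib

section
/- Let π^f = π_0 … π_n be a nonempty finite trace and let π^i = π_0 … π_{n-1} (π_n)^ω be the infinite trace obtained from π^f by repeating its last timestep forever. Then for every qualitative formula φ, the finite trace π^f satisfies φ under LTLf semantics if and only if the infinite trace π^i satisfies φ under LTL semantics, i.e., π_0…π_n ⊨_{LTLf} φ ⟺ π_0…π_{n-1}(π_n)^ω ⊨_{LTL} φ. -/
/-- LTLf formulas over propositions indexed by ℕ. -/
inductive LTLf : Type where
  | prop : ℕ → LTLf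
  | not : LTLf → LTLf
  | and : LTLf → LTLf → LTLf
  | or : LTLf → LTLf → LTLf
  | next : LTLf → LTLf
  | wnext : LTLf → LTLf
  | until_ : LTLf → LTLf → LTLf

/-- The formula `true`, expressed as the tautology `p₀ ∨ ¬p₀`. -/
def LTLf.top : LTLf := .or (.prop 0) (.not (.prop 0))

/-- Eventually: `F φ := true U φ`. -/
def LTLf.ev (φ : LTLf) : LTLf := .until_ .top φ

/-- Globally: `G φ := ¬ F ¬ φ`. -/
def LTLf.glob (φ : LTLf) : LTLf := .not (.ev (.not φ))

/-- Weak until: `φ W ψ := (φ U ψ) ∨ G φ`. -/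
def LTLf.wuntil (φ ψ : LTLf) : LTLf := .or (.until_ φ ψ) (.glob φ)

/-- LTLf satisfaction `π, t ⊨ φ` on a finite trace of length `T`
(the trace is given by `π : ℕ → ℕ → Bool`, only its values at timesteps `< T` matter). -/
def FinSat (T : ℕ) (π : ℕ → ℕ → Bool) : LTLf → ℕ → Prop
  | .prop p, t => π t p = true
  | .not φ, t => ¬ FinSat T π φ t
  | .and φ ψ, t => FinSat T π φ t ∧ FinSat T π ψ t
  | .or φ ψ, t => FinSat T π φ t ∨ FinSat T π ψ t
  | .next φ, t => t + 1 < T ∧ FinSat T π φ (t + 1)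
  | .wnext φ, t => T ≤ t + 1 ∨ FinSat T π φ (t + 1)
  | .until_ φ ψ, t =>
      ∃ k, t ≤ k ∧ k < T ∧ FinSat T π ψ k ∧ ∀ j, t ≤ j → j < k → FinSat T π φ j

/-- LTL satisfaction `σ, t ⊨ φ` on an infinite trace `σ`. -/
def InfSat (σ : ℕ → ℕ → Bool) : LTLf → ℕ → Prop
  | .prop p, t => σ t p = true
  | .not φ, t => ¬ InfSat σ φ t
  | .and φ ψ, t => InfSat σ φ t ∧ InfSat σ ψ t
  | .or φ ψ, t => InfSat σ φ t ∨ InfSat σ ψ t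
  | .next φ, t => InfSat σ φ (t + 1)
  | .wnext φ, t => InfSat σ φ (t + 1)
  | .until_ φ ψ, t =>
      ∃ k, t ≤ k ∧ InfSat σ ψ k ∧ ∀ j, t ≤ j → j < k → InfSat σ φ j

/-- A formula is qualitative if it contains no next (`X`) and no weak next (`WX`). -/
def Qualitative : LTLf → Prop
  | .prop _ => True
  | .not φ => Qualitative φ
  | .and φ ψ => Qualitative φ ∧ Qualitative ψ
  | .or φ ψ => Qualitative φ ∧ Qualitative ψ
  | .next _ => False
  | .wnext _ => False
  | .until_ φ ψ => Qualitative φ ∧ Qualitative ψ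

/-- Binary step function: `H z = 1` if `z ≥ 0` and `0` otherwise. -/
noncomputable def H (z : ℝ) : ℝ := if 0 ≤ z then 1 else 0

lemma stutter_aux (T : ℕ) (π : ℕ → ℕ → Bool) :
    ∀ φ : LTLf, Qualitative φ → ∀ s t, T - 1 ≤ s → T - 1 ≤ t →
      (InfSat (fun u => π (min u (T - 1))) φ s ↔ InfSat (fun u => π (min u (T - 1))) φ t) := by
  intro φ
  induction φ with
  | prop p =>
    intro _ s t hs ht
    simp [InfSat, min_eq_right hs, min_eq_right ht]
  | not φ ih =>
    intro h s t hs ht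
    simp only [InfSat]
    rw [ih h s t hs ht]
  | and φ ψ ihφ ihψ =>
    intro h s t hs ht
    simp only [InfSat]
    rw [ihφ h.1 s t hs ht, ihψ h.2 s t hs ht]
  | or φ ψ ihφ ihψ =>
    intro h s t hs ht
    simp only [InfSat]
    rw [ihφ h.1 s t hs ht, ihψ h.2 s t hs ht]
  | next φ _ => intro h; exact h.elim
  | wnext φ _ => intro h; exact h.elim
  | until_ φ ψ ihφ ihψ =>
    intro h s t hs ht
    constructor
    · rintro ⟨k, hk, hψ, _⟩
      exact ⟨t, le_refl t, (ihψ h.2 k t (hs.trans hk) ht).1 hψ,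
        fun j hj hj' => absurd (lt_of_le_of_lt hj hj') (lt_irrefl _)⟩
    · rintro ⟨k, hk, hψ, _⟩
      exact ⟨s, le_refl s, (ihψ h.2 k s (ht.trans hk) hs).1 hψ,
        fun j hj hj' => absurd (lt_of_le_of_lt hj hj') (lt_irrefl _)⟩

lemma main_aux (T : ℕ) (hT : 1 ≤ T) (π : ℕ → ℕ → Bool) :
    ∀ φ : LTLf, Qualitative φ → ∀ t, t < T →
      (FinSat T π φ t ↔ InfSat (fun u => π (min u (T - 1))) φ t) := by
  intro φ
  induction φ with
  | prop p =>
    intro _ t ht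
    have : min t (T - 1) = t := min_eq_left (by omega)
    simp [FinSat, InfSat, this]
  | not φ ih =>
    intro h t ht
    simp only [FinSat, InfSat]
    rw [ih h t ht]
  | and φ ψ ihφ ihψ =>
    intro h t ht
    simp only [FinSat, InfSat]
    rw [ihφ h.1 t ht, ihψ h.2 t ht]
  | or φ ψ ihφ ihψ =>
    intro h t ht
    simp only [FinSat, InfSat]
    rw [ihφ h.1 t ht, ihψ h.2 t ht]
  | next φ _ => intro h; exact h.elim
  | wnext φ _ => intro h; exact h.elim
  | until_ φ ψ ihφ ihψ =>
    intro h t ht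
    constructor
    · rintro ⟨k, htk, hkT, hψ, hφall⟩
      exact ⟨k, htk, (ihψ h.2 k hkT).1 hψ,
        fun j hj hjk => (ihφ h.1 j (hjk.trans hkT)).1 (hφall j hj hjk)⟩
    · rintro ⟨k, htk, hψ, hφall⟩
      by_cases hk : k < T
      · exact ⟨k, htk, hk, (ihψ h.2 k hk).2 hψ,
          fun j hj hjk => (ihφ h.1 j (hjk.trans hk)).2 (hφall j hj hjk)⟩
      · have hTk : T - 1 ≤ k := by omega
        have hψ' : InfSat (fun u => π (min u (T - 1))) ψ (T - 1) :=
          (stutter_aux T π ψ h.2 k (T - 1) hTk (le_refl _)).1 hψ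
        refine ⟨T - 1, by omega, by omega, (ihψ h.2 (T - 1) (by omega)).2 hψ', ?_⟩
        intro j hj hjk
        exact (ihφ h.1 j (by omega)).2 (hφall j hj (by omega))

/-- A nonempty finite trace satisfies a qualitative formula under LTLf semantics
iff the infinite trace obtained by repeating its last timestep forever satisfies
it under LTL semantics. -/
theorem finite_iff_infinite_padding
    (T : ℕ) (hT : 1 ≤ T) (π : ℕ → ℕ → Bool) (φ : LTLf) (hφ : Qualitative φ) :
    FinSat T π φ 0 ↔ InfSat (fun t => π (min t (T - 1))) φ 0 :=
  main_aux T hT π φ hφ 0 hT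
end

section
/- If φ and ψ are qualitative formulas that are LTL-equivalent on infinite traces (every infinite trace satisfies φ if and only if it satisfies ψ), then φ and ψ are LTLf-equivalent on finite traces: every nonempty finite trace satisfies φ under LTLf semantics if and only if it satisfies ψ under LTLf semantics. That is, every qualitative LTL rewriting is also a valid LTLf rewriting. -/
/-- On a trace constant from `m` on, qualitative formulas don't distinguish
positions `≥ m`. -/
lemma InfSat_stab (σ : ℕ → ℕ → Bool) (m : ℕ) (hc : ∀ t, m ≤ t → σ t = σ m) :
    ∀ φ : LTLf, Qualitative φ → ∀ t, m ≤ t → (InfSat σ φ t ↔ InfSat σ φ m) := by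
  intro φ
  induction φ with
  | prop p => intro _ t ht; simp [InfSat, hc t ht]
  | not φ ih => intro hq t ht; simp only [InfSat]; rw [ih hq t ht]
  | and φ ψ ihφ ihψ =>
      intro hq t ht; simp only [InfSat]; rw [ihφ hq.1 t ht, ihψ hq.2 t ht]
  | or φ ψ ihφ ihψ =>
      intro hq t ht; simp only [InfSat]; rw [ihφ hq.1 t ht, ihψ hq.2 t ht]
  | next φ ih => intro hq; exact absurd hq id
  | wnext φ ih => intro hq; exact absurd hq id
  | until_ φ ψ ihφ ihψ =>
      intro hq t ht
      constructor
      · rintro ⟨k, hk, hψk, -⟩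
        exact ⟨m, le_refl m, (ihψ hq.2 m le_rfl).mp
          ((ihψ hq.2 k (le_trans ht hk)).mp hψk), fun j h1 h2 => absurd h1 (by omega)⟩
      · rintro ⟨k, hk, hψk, -⟩
        exact ⟨t, le_refl t, (ihψ hq.2 t ht).mpr
          ((ihψ hq.2 k hk).mp hψk), fun j h1 h2 => absurd h1 (by omega)⟩

/-- Transfer between a finite trace and its infinite extension repeating the
last state. -/
lemma FinSat_iff_InfSat (T : ℕ) (hT : 1 ≤ T) (π : ℕ → ℕ → Bool) :
    ∀ φ : LTLf, Qualitative φ → ∀ t, t < T →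
      (FinSat T π φ t ↔ InfSat (fun s => π (min s (T-1))) φ t) := by
  set σ : ℕ → ℕ → Bool := fun s => π (min s (T-1)) with hσ
  have hc : ∀ t, T - 1 ≤ t → σ t = σ (T-1) := by
    intro t ht; simp [hσ, min_eq_right ht]
  intro φ
  induction φ with
  | prop p =>
      intro _ t htT
      have : min t (T-1) = t := min_eq_left (by omega)
      simp [FinSat, InfSat, hσ, this]
  | not φ ih => intro hq t htT; simp only [FinSat, InfSat]; rw [ih hq t htT]
  | and φ ψ ihφ ihψ =>
      intro hq t htT; simp only [FinSat, InfSat]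
      rw [ihφ hq.1 t htT, ihψ hq.2 t htT]
  | or φ ψ ihφ ihψ =>
      intro hq t htT; simp only [FinSat, InfSat]
      rw [ihφ hq.1 t htT, ihψ hq.2 t htT]
  | next φ ih => intro hq; exact absurd hq id
  | wnext φ ih => intro hq; exact absurd hq id
  | until_ φ ψ ihφ ihψ =>
      intro hq t htT
      constructor
      · rintro ⟨k, hk, hkT, hψk, hφj⟩
        exact ⟨k, hk, (ihψ hq.2 k hkT).mp hψk,
          fun j h1 h2 => (ihφ hq.1 j (by omega)).mp (hφj j h1 h2)⟩
      · rintro ⟨k, hk, hψk, hφj⟩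
        by_cases hkT : k < T
        · exact ⟨k, hk, hkT, (ihψ hq.2 k hkT).mpr hψk,
            fun j h1 h2 => (ihφ hq.1 j (by omega)).mpr (hφj j h1 h2)⟩
        · refine ⟨T-1, by omega, by omega, ?_, ?_⟩
          · exact (ihψ hq.2 (T-1) (by omega)).mpr
              ((InfSat_stab σ (T-1) hc ψ hq.2 k (by omega)).mp hψk)
          · intro j h1 h2
            exact (ihφ hq.1 j (by omega)).mpr (hφj j h1 (by omega))

/-- Every qualitative LTL rewriting is a valid LTLf rewriting: if two qualitative
formulas are equivalent on all infinite traces, they are equivalent on all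
nonempty finite traces. -/
theorem qualitative_rewriting_valid
    (φ ψ : LTLf) (hφ : Qualitative φ) (hψ : Qualitative ψ)
    (h : ∀ σ : ℕ → ℕ → Bool, InfSat σ φ 0 ↔ InfSat σ ψ 0) :
    ∀ (T : ℕ), 1 ≤ T → ∀ π : ℕ → ℕ → Bool, FinSat T π φ 0 ↔ FinSat T π ψ 0 := by
  intro T hT π
  rw [FinSat_iff_InfSat T hT π φ hφ 0 (by omega),
      FinSat_iff_InfSat T hT π ψ hψ 0 (by omega)]
  exact h _
end

section
/- Padding a finite trace by repeating its last timestep preserves satisfaction of qualitative LTLf formulas: let φ be a qualitative formula, let π = π_0 … π_{T-1} be a nonempty finite trace, and let π' = π_0 … π_{T-1} π_{T-1} … π_{T-1} be the trace obtained by appending k ≥ 0 additional copies of the last timestep π_{T-1}. Then π satisfies φ under LTLf semantics if and only if π' satisfies φ under LTLf semantics. -/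
theorem padding_aux (T : ℕ) (hT : 1 ≤ T) (k : ℕ) (π : ℕ → ℕ → Bool)
    (φ : LTLf) (hq : Qualitative φ) :
    ∀ t, t < T + k →
      (FinSat (T + k) (fun t => π (min t (T - 1))) φ t ↔ FinSat T π φ (min t (T - 1))) := by
  induction φ with
  | prop p => intro t _; simp [FinSat]
  | not φ ih => intro t ht; simp only [FinSat]; rw [ih hq t ht]
  | and φ ψ ih1 ih2 => intro t ht; simp only [FinSat]; rw [ih1 hq.1 t ht, ih2 hq.2 t ht]
  | or φ ψ ih1 ih2 => intro t ht; simp only [FinSat]; rw [ih1 hq.1 t ht, ih2 hq.2 t ht]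
  | next φ ih => exact hq.elim
  | wnext φ ih => exact hq.elim
  | until_ φ ψ ih1 ih2 =>
    intro t ht
    simp only [FinSat]
    constructor
    · rintro ⟨m, htm, hmT, hψ, hφj⟩
      refine ⟨min m (T - 1), by omega, by omega, ?_, ?_⟩
      · exact (ih2 hq.2 m hmT).mp hψ
      · intro j hj1 hj2
        have htj : t ≤ j := by omega
        have hjT : j < T + k := by omega
        have := (ih1 hq.1 j hjT).mp (hφj j htj (by omega))
        rwa [min_eq_left (by omega : j ≤ T - 1)] at this
    · rintro ⟨m, hm1, hm2, hψ, hφj⟩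
      refine ⟨max t m, le_max_left _ _, by omega, ?_, ?_⟩
      · have hlt : max t m < T + k := by omega
        rw [ih2 hq.2 (max t m) hlt]
        have : min (max t m) (T - 1) = m := by omega
        rwa [this]
      · intro j hj1 hj2
        have hjm : j < m := by omega
        have hjT : j < T + k := by omega
        rw [ih1 hq.1 j hjT, min_eq_left (by omega : j ≤ T - 1)]
        exact hφj j (by omega) hjm

/-- Padding a nonempty finite trace with `k` extra copies of its last timestep
preserves satisfaction of qualitative LTLf formulas. -/
theorem padding_preserves_qualitative
    (T : ℕ) (hT : 1 ≤ T) (π : ℕ → ℕ → Bool) (φ : LTLf) (hφ : Qualitative φ)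
    (k : ℕ) :
    FinSat T π φ 0 ↔ FinSat (T + k) (fun t => π (min t (T - 1))) φ 0 := by
  have := padding_aux T hT k π φ hφ 0 (by omega)
  simpa using this.symm
end

section
/- The NeuralLTLf weight setting for until computes the until operator: consider a discretized NeuralLTLf filter over n = 2 Boolean input sequences x_1, x_2 of length T with W_P = (1, 2), W_M = (0, 0), W_Q = 1, b = −1.5, output base value v(T) = 0, and arbitrary input base values x_1(T), x_2(T) ∈ {0,1}. Then for every t with 0 ≤ t < T, the filter output satisfies v(t) = 1 if and only if there exists k with t ≤ k < T such that x_2(k) = 1 and x_1(j) = 1 for all j with t ≤ j < k (i.e., v(t) equals the truth value of x_1 U x_2 at time t). -/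
/-- The NeuralLTLf weight setting `W_P = (1,2)`, `W_M = (0,0)`, `W_Q = 1`,
`b = -1.5`, output base value `v(T) = 0` computes the until operator `x₁ U x₂`. -/
theorem filter_computes_until
    (T : ℕ) (x1 x2 v : ℕ → ℝ)
    (hx1 : ∀ t, t ≤ T → x1 t = 0 ∨ x1 t = 1)
    (hx2 : ∀ t, t ≤ T → x2 t = 0 ∨ x2 t = 1)
    (hvT : v T = 0)
    (hrec : ∀ t, t < T →
      v t = H ((1 * x1 t + 2 * x2 t) + (0 * x1 (t + 1) + 0 * x2 (t + 1))
                + max 0 1 * v (t + 1) + (-1.5))) :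
    ∀ t, t < T →
      (v t = 1 ↔ ∃ k, t ≤ k ∧ k < T ∧ x2 k = 1 ∧ ∀ j, t ≤ j → j < k → x1 j = 1) := by

  have untilStep : ∀ s, s < T →
      ((∃ k, s ≤ k ∧ k < T ∧ x2 k = 1 ∧ ∀ j, s ≤ j → j < k → x1 j = 1) ↔
        (x2 s = 1 ∨ (x1 s = 1 ∧
          ∃ k, s + 1 ≤ k ∧ k < T ∧ x2 k = 1 ∧ ∀ j, s + 1 ≤ j → j < k → x1 j = 1))) := by
    intro s hs
    constructor
    · rintro ⟨k, hk, hkT, hx2k, hall⟩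
      rcases Nat.eq_or_lt_of_le hk with h | h
      · left; rw [h]; exact hx2k
      · right
        exact ⟨hall s le_rfl h, k, h, hkT, hx2k, fun j hj hjk => hall j (by omega) hjk⟩
    · rintro (h | ⟨hx1s, k, hk, hkT, hx2k, hall⟩)
      · exact ⟨s, le_rfl, hs, h, fun j hj hjk => absurd hjk (by omega)⟩
      · refine ⟨k, by omega, hkT, hx2k, fun j hj hjk => ?_⟩
        rcases Nat.eq_or_lt_of_le hj with h | h
        · rw [← h]; exact hx1s
        · exact hall j h hjk
  have key : ∀ d t, t < T → T - t ≤ d →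
      ((v t = 1 ↔ ∃ k, t ≤ k ∧ k < T ∧ x2 k = 1 ∧ ∀ j, t ≤ j → j < k → x1 j = 1) ∧
        (v t = 0 ∨ v t = 1)) := by
    intro d
    induction d with
    | zero => intro t ht hd; omega
    | succ d ih =>
      intro t ht hd
      have hv1 : (v (t+1) = 1 ↔ ∃ k, t+1 ≤ k ∧ k < T ∧ x2 k = 1 ∧
          ∀ j, t+1 ≤ j → j < k → x1 j = 1) ∧ (v (t+1) = 0 ∨ v (t+1) = 1) := by
        rcases Nat.lt_or_ge (t+1) T with h | h
        · exact ih (t+1) h (by omega)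
        · have hT : t+1 = T := by omega
          refine ⟨?_, Or.inl (by rw [hT]; exact hvT)⟩
          rw [hT, hvT]
          constructor
          · intro h0; norm_num at h0
          · rintro ⟨k, hk1, hk2, _⟩; omega
      have hrw := hrec t ht
      rw [show max (0:ℝ) 1 = 1 by norm_num] at hrw
      rcases hx1 t (le_of_lt ht) with h1 | h1 <;>
        rcases hx2 t (le_of_lt ht) with h2 | h2 <;>
          rcases hv1.2 with h3 | h3 <;>
            rw [h1, h2, h3] at hrw <;>
              norm_num [H] at hrw <;>
                constructor <;>
                  first
                    | (left; exact hrw)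
                    | (right; exact hrw)
                    | (rw [untilStep t ht, ← hv1.1, hrw, h1, h2, h3]; norm_num)
  intro t ht
  exact (key (T - t) t ht le_rfl).1
end

section
/- The NeuralLTLf weight setting for weak until computes the weak until operator: consider a discretized NeuralLTLf filter over n = 2 Boolean input sequences x_1, x_2 of length T with W_P = (1, 2), W_M = (0, 0), W_Q = 1, b = −1.5, output base value v(T) = 1, and arbitrary input base values x_1(T), x_2(T) ∈ {0,1}. Then for every t with 0 ≤ t < T, the filter output satisfies v(t) = 1 if and only if either there exists k with t ≤ k < T such that x_2(k) = 1 and x_1(j) = 1 for all j with t ≤ j < k, or x_1(j) = 1 for all j with t ≤ j < T (i.e., v(t) equals the truth value of x_1 W x_2 at time t). -/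
/-- The NeuralLTLf weight setting `W_P = (1,2)`, `W_M = (0,0)`, `W_Q = 1`,
`b = -1.5`, output base value `v(T) = 1` computes the weak until operator
`x₁ W x₂`. -/
theorem filter_computes_weak_until
    (T : ℕ) (x1 x2 v : ℕ → ℝ)
    (hx1 : ∀ t, t ≤ T → x1 t = 0 ∨ x1 t = 1)
    (hx2 : ∀ t, t ≤ T → x2 t = 0 ∨ x2 t = 1)
    (hvT : v T = 1)
    (hrec : ∀ t, t < T →
      v t = H ((1 * x1 t + 2 * x2 t) + (0 * x1 (t + 1) + 0 * x2 (t + 1))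
                + max 0 1 * v (t + 1) + (-1.5))) :
    ∀ t, t < T →
      (v t = 1 ↔ (∃ k, t ≤ k ∧ k < T ∧ x2 k = 1 ∧ ∀ j, t ≤ j → j < k → x1 j = 1)
                  ∨ (∀ j, t ≤ j → j < T → x1 j = 1)) := by
 -- proof
  intro t ht
  -- boolean values of v
  have hv01 : ∀ t, t ≤ T → v t = 0 ∨ v t = 1 := by
    intro s hs
    rcases eq_or_lt_of_le hs with h | h
    · right; rw [h, hvT]
    · rw [hrec s h]; unfold H; split <;> simp
  -- step characterization
  have hstep : ∀ s, s < T →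
      (v s = 1 ↔ x2 s = 1 ∨ (x1 s = 1 ∧ v (s+1) = 1)) := by
    intro s hs
    have h1 := hx1 s (le_of_lt hs)
    have h2 := hx2 s (le_of_lt hs)
    have h3 := hv01 (s+1) hs
    rw [hrec s hs]
    unfold H
    rcases h1 with h1 | h1 <;> rcases h2 with h2 | h2 <;> rcases h3 with h3 | h3 <;>
      rw [h1, h2, h3] <;> norm_num
  -- main: induction on T - t
  suffices key : ∀ n, ∀ t, T - t = n → t < T →
      (v t = 1 ↔ (∃ k, t ≤ k ∧ k < T ∧ x2 k = 1 ∧ ∀ j, t ≤ j → j < k → x1 j = 1)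
                  ∨ (∀ j, t ≤ j → j < T → x1 j = 1)) by
    exact key (T - t) t rfl ht
  intro n
  induction n with
  | zero => intro t h ht; omega
  | succ n ih =>
    intro t h ht
    rw [hstep t ht]
    rcases eq_or_lt_of_le (Nat.succ_le_of_lt ht) with hT | hT
    · -- t + 1 = T
      have hv : v (t+1) = 1 := by
        have hT' : t + 1 = T := hT
        rw [hT', hvT]
      rw [hv]
      constructor
      · rintro (h2 | ⟨h1, -⟩)
        · exact Or.inl ⟨t, le_refl t, ht, h2, fun j hj1 hj2 => by omega⟩
        · refine Or.inr (fun j hj1 hj2 => ?_)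
          have hjt : j = t := by omega
          rwa [hjt]
      · rintro (⟨k, hk1, hk2, hk3, hk4⟩ | hg)
        · have : k = t := by omega
          subst this; exact Or.inl hk3
        · exact Or.inr ⟨hg t (le_refl t) ht, rfl⟩
    · -- t + 1 < T
      have ih' := ih (t+1) (by omega) hT
      rw [ih']
      constructor
      · rintro (h2 | ⟨h1, ⟨k, hk1, hk2, hk3, hk4⟩ | hg⟩)
        · exact Or.inl ⟨t, le_refl t, ht, h2, fun j hj1 hj2 => by omega⟩
        · refine Or.inl ⟨k, by omega, hk2, hk3, fun j hj1 hj2 => ?_⟩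
          rcases eq_or_lt_of_le hj1 with rfl | hj
          · exact h1
          · exact hk4 j (by omega) hj2
        · refine Or.inr (fun j hj1 hj2 => ?_)
          rcases eq_or_lt_of_le hj1 with rfl | hj
          · exact h1
          · exact hg j (by omega) hj2
      · rintro (⟨k, hk1, hk2, hk3, hk4⟩ | hg)
        · rcases eq_or_lt_of_le hk1 with rfl | hk
          · exact Or.inl hk3
          · refine Or.inr ⟨hk4 t (le_refl t) hk, Or.inl ⟨k, by omega, hk2, hk3,
              fun j hj1 hj2 => hk4 j (by omega) hj2⟩⟩
        · exact Or.inr ⟨hg t (le_refl t) ht, Or.inr (fun j hj1 hj2 => hg j (by omega) hj2)⟩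
end

section
/- The NeuralLTLf weight setting for next computes the next operator: consider a discretized NeuralLTLf filter over n = 1 Boolean input sequence x of length T with W_P = (0), W_M = (1), W_Q = 0, b = −0.5, input base value x(T) = 0, and arbitrary output base value v(T) ∈ {0,1}. Then for every t with 0 ≤ t < T, the filter output satisfies v(t) = 1 if and only if t + 1 < T and x(t+1) = 1 (i.e., v(t) equals the truth value of X x at time t). -/
/-- The NeuralLTLf weight setting `W_P = (0)`, `W_M = (1)`, `W_Q = 0`,
`b = -0.5`, input base value `x(T) = 0` computes the next operator `X x`. -/
theorem filter_computes_next
    (T : ℕ) (x v : ℕ → ℝ)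
    (hx : ∀ t, t ≤ T → x t = 0 ∨ x t = 1)
    (hxT : x T = 0)
    (hvT : v T = 0 ∨ v T = 1)
    (hrec : ∀ t, t < T →
      v t = H (0 * x t + 1 * x (t + 1) + max 0 0 * v (t + 1) + (-0.5))) :
    ∀ t, t < T → (v t = 1 ↔ t + 1 < T ∧ x (t + 1) = 1) := by
  intro t ht
  have hr := hrec t ht
  simp only [zero_mul, one_mul, max_self, add_zero, zero_add] at hr
  rcases lt_or_eq_of_le (Nat.succ_le_of_lt ht) with h1 | h1
  · rcases hx (t+1) (le_of_lt h1) with h | h <;>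
      simp [H, hr, h, h1] <;> norm_num
  · have : x (t+1) = 0 := by rw [show t+1 = T from h1]; exact hxT
    simp [H, hr, this, h1]
    norm_num
end

section
/- The NeuralLTLf weight setting for weak next computes the weak next operator: consider a discretized NeuralLTLf filter over n = 1 Boolean input sequence x of length T with W_P = (0), W_M = (1), W_Q = 0, b = −0.5, input base value x(T) = 1, and arbitrary output base value v(T) ∈ {0,1}. Then for every t with 0 ≤ t < T, the filter output satisfies v(t) = 1 if and only if t + 1 ≥ T or x(t+1) = 1 (i.e., v(t) equals the truth value of WX x at time t). -/
/-- The NeuralLTLf weight setting `W_P = (0)`, `W_M = (1)`, `W_Q = 0`,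
`b = -0.5`, input base value `x(T) = 1` computes the weak next operator `WX x`. -/
theorem filter_computes_weak_next
    (T : ℕ) (x v : ℕ → ℝ)
    (hx : ∀ t, t ≤ T → x t = 0 ∨ x t = 1)
    (hxT : x T = 1)
    (hvT : v T = 0 ∨ v T = 1)
    (hrec : ∀ t, t < T →
      v t = H (0 * x t + 1 * x (t + 1) + max 0 0 * v (t + 1) + (-0.5))) :
        ∀ t, t < T → (v t = 1 ↔ (T ≤ t + 1 ∨ x (t + 1) = 1)) := by
  intro t ht
  have h := hrec t ht
  rcases eq_or_lt_of_le (Nat.succ_le_of_lt ht) with he | hlt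
  · constructor
    · intro _; left; omega
    · intro _
      rw [h, show t+1=T from he, hxT]; norm_num [H, max_self]
  · have hx1 := hx (t+1) (by omega)
    rcases hx1 with h0 | h1
    · constructor
      · intro hv
        rw [h, h0] at hv; unfold H at hv; norm_num at hv
      · intro hc
        rcases hc with hc | hc
        · omega
        · rw [h0] at hc; norm_num at hc
    · constructor
      · intro _; right; exact h1
      · intro _; rw [h, h1]; unfold H; norm_num
end

section
/- The NeuralLTLf weight setting for eventually computes the eventually operator: consider a discretized NeuralLTLf filter over n = 1 Boolean input sequence x of length T with W_P = (1), W_M = (0), W_Q = 1, b = −0.5, output base value v(T) = 0, and arbitrary input base value x(T) ∈ {0,1}. Then for every t with 0 ≤ t < T, the filter output satisfies v(t) = 1 if and only if there exists k with t ≤ k < T such that x(k) = 1 (i.e., v(t) equals the truth value of F x at time t). -/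
/-- The NeuralLTLf weight setting `W_P = (1)`, `W_M = (0)`, `W_Q = 1`,
`b = -0.5`, output base value `v(T) = 0` computes the eventually operator `F x`. -/
theorem filter_computes_eventually
    (T : ℕ) (x v : ℕ → ℝ)
    (hx : ∀ t, t ≤ T → x t = 0 ∨ x t = 1)
    (hvT : v T = 0)
    (hrec : ∀ t, t < T →
      v t = H (1 * x t + 0 * x (t + 1) + max 0 1 * v (t + 1) + (-0.5))) :
    ∀ t, t < T → (v t = 1 ↔ ∃ k, t ≤ k ∧ k < T ∧ x k = 1) := by
  
  have hv01 : ∀ s, s ≤ T → v s = 0 ∨ v s = 1 := by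
    intro s hs
    rcases lt_or_eq_of_le hs with h | h
    · rw [hrec s h]; unfold H; split
      · right; rfl
      · left; rfl
    · left; rw [h, hvT]
  suffices key : ∀ d t, t + d = T → t < T →
      (v t = 1 ↔ ∃ k, t ≤ k ∧ k < T ∧ x k = 1) by
    intro t ht; exact key (T - t) t (by omega) ht
  intro d
  induction d with
  | zero => intro t h ht; omega
  | succ d ih =>
    intro t h ht
    have hrt := hrec t ht
    have hmax : max (0:ℝ) 1 = 1 := by norm_num
    rw [hmax] at hrt
    by_cases hT : t + 1 = T
    · -- last step
      rw [hT, hvT] at hrt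
      rcases hx t (le_of_lt ht) with hxt | hxt <;> rw [hxt] at hrt <;>
        norm_num [H] at hrt
      · constructor
        · intro hv; rw [hrt] at hv; norm_num at hv
        · rintro ⟨k, hk1, hk2, hk3⟩
          have : k = t := by omega
          rw [this, hxt] at hk3; norm_num at hk3
      · constructor
        · intro _; exact ⟨t, le_refl t, ht, hxt⟩
        · intro _; exact hrt
    · have ht1 : t + 1 < T := by omega
      have ihs := ih (t + 1) (by omega) ht1
      rcases hv01 (t + 1) (le_of_lt ht1) with hv1 | hv1 <;>
        rcases hx t (le_of_lt ht) with hxt | hxt <;>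
          rw [hv1, hxt] at hrt <;> norm_num [H] at hrt
      · -- v(t+1)=0, x t = 0 : v t = 0
        constructor
        · intro hv; rw [hrt] at hv; norm_num at hv
        · rintro ⟨k, hk1, hk2, hk3⟩
          rcases Nat.eq_or_lt_of_le hk1 with rfl | hk1'
          · rw [hxt] at hk3; norm_num at hk3
          · exfalso
            have : v (t+1) = 1 := ihs.mpr ⟨k, by omega, hk2, hk3⟩
            rw [hv1] at this; norm_num at this
      · -- v(t+1)=0, x t = 1 : v t = 1
        constructor
        · intro _; exact ⟨t, le_refl t, ht, hxt⟩
        · intro _; exact hrt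
      · -- v(t+1)=1, x t = 0
        constructor
        · intro _
          obtain ⟨k, hk1, hk2, hk3⟩ := ihs.mp hv1
          exact ⟨k, by omega, hk2, hk3⟩
        · intro _; exact hrt
      · -- v(t+1)=1, x t = 1
        constructor
        · intro _; exact ⟨t, le_refl t, ht, hxt⟩
        · intro _; exact hrt
end

section
/- The NeuralLTLf weight setting for globally computes the globally operator: consider a discretized NeuralLTLf filter over n = 1 Boolean input sequence x of length T with W_P = (1), W_M = (0), W_Q = 1, b = −1.5, output base value v(T) = 1, and arbitrary input base value x(T) ∈ {0,1}. Then for every t with 0 ≤ t < T, the filter output satisfies v(t) = 1 if and only if x(k) = 1 for every k with t ≤ k < T (i.e., v(t) equals the truth value of G x at time t). -/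
/-- The NeuralLTLf weight setting `W_P = (1)`, `W_M = (0)`, `W_Q = 1`,
`b = -1.5`, output base value `v(T) = 1` computes the globally operator `G x`. -/
theorem filter_computes_globally
    (T : ℕ) (x v : ℕ → ℝ)
    (hx : ∀ t, t ≤ T → x t = 0 ∨ x t = 1)
    (hvT : v T = 1)
    (hrec : ∀ t, t < T →
      v t = H (1 * x t + 0 * x (t + 1) + max 0 1 * v (t + 1) + (-1.5))) :
    ∀ t, t < T → (v t = 1 ↔ ∀ k, t ≤ k → k < T → x k = 1) := by

  have hH : ∀ z : ℝ, H z = 0 ∨ H z = 1 := by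
    intro z; unfold H; split <;> simp
  suffices h : ∀ n t, t ≤ T → T - t = n → (v t = 1 ↔ ∀ k, t ≤ k → k < T → x k = 1) by
    intro t ht; exact h (T - t) t (le_of_lt ht) rfl
  intro n
  induction n with
  | zero =>
    intro t ht hn
    have : t = T := by omega
    subst this
    constructor
    · intro _ k hk hk'; omega
    · intro _; exact hvT
  | succ n ih =>
    intro t ht hn
    have htT : t < T := by omega
    have hvt1 : v (t + 1) = 1 ↔ ∀ k, t + 1 ≤ k → k < T → x k = 1 :=
      ih (t + 1) (by omega) (by omega)
    have hv01 : v (t + 1) = 0 ∨ v (t + 1) = 1 := by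
      rcases Nat.lt_or_ge (t + 1) T with h1 | h1
      · rw [hrec (t + 1) h1]; exact hH _
      · right; have : t + 1 = T := by omega
        rw [this]; exact hvT
    have hxt : x t = 0 ∨ x t = 1 := hx t (le_of_lt htT)
    have hrt := hrec t htT
    constructor
    · intro hvt k hk hkT
      rcases eq_or_lt_of_le hk with rfl | hk'
      · -- need x t = 1
        rcases hxt with h0 | h1
        · exfalso
          rcases hv01 with hv0 | hv0 <;>
          · rw [h0, hv0] at hrt
            unfold H at hrt
            rw [if_neg (by norm_num)] at hrt
            rw [hrt] at hvt; norm_num at hvt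
        · exact h1
      · -- k > t: use IH, need v(t+1) = 1
        have hv1 : v (t + 1) = 1 := by
          rcases hv01 with hv0 | hv1
          · exfalso
            rcases hxt with h0 | h0 <;>
            · rw [h0, hv0] at hrt
              unfold H at hrt
              rw [if_neg (by norm_num)] at hrt
              rw [hrt] at hvt; norm_num at hvt
          · exact hv1
        exact hvt1.mp hv1 k (by omega) hkT
    · intro hall
      have hx1 : x t = 1 := hall t le_rfl htT
      have hv1 : v (t + 1) = 1 := hvt1.mpr (fun k hk hkT => hall k (by omega) hkT)
      rw [hrt, hx1, hv1]
      unfold H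
      rw [if_pos (by norm_num)]
end

section
/- Qualitative LTL formulas are stutter-invariant on infinite traces: let φ be a qualitative formula, let σ = σ_0 σ_1 σ_2 … be an infinite trace, let s ∈ ℕ, and let σ' = σ_0 … σ_s σ_s σ_{s+1} … be the infinite trace obtained from σ by duplicating the timestep σ_s. Then σ satisfies φ under LTL semantics if and only if σ' satisfies φ under LTL semantics. -/
/-- Map from original time to stuttered time. -/
def stF (s i : ℕ) : ℕ := if i ≤ s then i else i + 1

/-- Map from stuttered time to original time. -/
def stG (s j : ℕ) : ℕ := if j ≤ s then j else j - 1

lemma stG_mono {s j j' : ℕ} (h : j ≤ j') : stG s j ≤ stG s j' := by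
  simp only [stG]; split_ifs <;> omega

lemma stutter_key (σ : ℕ → ℕ → Bool) (s : ℕ) (φ : LTLf) (hφ : Qualitative φ) :
    ∀ j, InfSat (fun t => if t ≤ s then σ t else σ (t - 1)) φ j ↔ InfSat σ φ (stG s j) := by
  induction φ with
  | prop p =>
      intro j; simp only [InfSat, stG]; split_ifs <;> tauto
  | not φ ih => intro j; simp only [InfSat]; exact not_congr (ih hφ j)
  | and φ ψ ihφ ihψ =>
      intro j; simp only [InfSat]; exact and_congr (ihφ hφ.1 j) (ihψ hφ.2 j)
  | or φ ψ ihφ ihψ =>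
      intro j; simp only [InfSat]; exact or_congr (ihφ hφ.1 j) (ihψ hφ.2 j)
  | next φ ih => exact absurd hφ (by simp [Qualitative])
  | wnext φ ih => exact absurd hφ (by simp [Qualitative])
  | until_ φ ψ ihφ ihψ =>
      intro j
      simp only [InfSat]
      constructor
      · rintro ⟨k, hk, hψk, hall⟩
        refine ⟨stG s k, stG_mono hk, (ihψ hφ.2 k).mp hψk, fun i hi₁ hi₂ => ?_⟩
        obtain ⟨i', hji', hi'k, hgi'⟩ : ∃ i', j ≤ i' ∧ i' < k ∧ stG s i' = i := by
          refine ⟨max j (stF s i), le_max_left _ _, ?_, ?_⟩ <;>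
          · simp only [stF, stG] at hi₁ hi₂ ⊢; split_ifs at * <;> omega
        have h2 := (ihφ hφ.1 i').mp (hall i' hji' hi'k)
        rwa [hgi'] at h2
      · rintro ⟨k, hk, hψk, hall⟩
        refine ⟨max j (stF s k), le_max_left _ _, ?_, fun i hi₁ hi₂ => ?_⟩
        · rw [ihψ hφ.2]
          have hgk : stG s (max j (stF s k)) = k := by
            simp only [stF, stG] at hk ⊢; split_ifs at * <;> omega
          rw [hgk]; exact hψk
        · rw [ihφ hφ.1]
          exact hall _ (stG_mono hi₁)
            (by simp only [stF, stG] at hk hi₂ ⊢; split_ifs at * <;> omega)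

/-- Qualitative LTL formulas are stutter-invariant on infinite traces:
duplicating the timestep `σ_s` of an infinite trace does not change satisfaction. -/
theorem infinite_stutter_invariant
    (σ : ℕ → ℕ → Bool) (φ : LTLf) (hφ : Qualitative φ) (s : ℕ) :
    InfSat σ φ 0 ↔ InfSat (fun t => if t ≤ s then σ t else σ (t - 1)) φ 0 := by
  have h := stutter_key σ s φ hφ 0
  simp only [stG, Nat.zero_le, if_true] at h
  exact h.symm
end
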